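/- If ρ ∈ (u_res)_* satisfies iρ ≥ 0 (i.e., iρ is a positive operator), then ρ is trace class and ‖ρ‖₁ ≤ ‖ρ‖_{(u_res)_*} ≤ (1+√2)·‖ρ‖₁, where ‖ρ‖_{(u_res)_*} = ‖p₊ρp₊‖₁ + ‖p₋ρp₋‖₁ + 2‖p₊ρp₋‖₂. -/

import Mathlib

/-!
Write `iρ = T†T`. In a basis adapted to `p₊`, the diagonal of `p₊(iρ)p₊` is `‖T p₊ eᵢ‖²` and that
of `p₋(iρ)p₋` is `‖T p₋ eᵢ‖²`, so the trace-class hypotheses make `T p₊` and `T p₋`, hence `T`,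
Hilbert–Schmidt. Then `ρ = -i T†T` is trace class and `tr(iρ) = a + b` with `a = ‖T p₊‖₂²`,
`b = ‖T p₋‖₂²`. The off-diagonal block `p₊ρp₋ = -i (T p₊)†(T p₋)` satisfies `‖p₊ρp₋‖₂² ≤ a b`,
so `2‖p₊ρp₋‖₂ ≤ a + b` by AM–GM: the upper bound even holds with the constant `2 ≤ 1 + √2`.
-/

open ContinuousLinearMap

noncomputable section

/-- `T` is a Hilbert–Schmidt operator: `∑ᵢ ‖T eᵢ‖² < ∞` for some Hilbert basis `(eᵢ)`. -/
def IsHS {H : Type*} [NormedAddCommGroup H] [InnerProductSpace ℂ H]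
    (T : H →L[ℂ] H) : Prop :=
  ∃ (ι : Type) (b : HilbertBasis ι ℂ H), Summable fun i => ‖T (b i)‖ ^ 2

/-- `T` is trace class: `T` is a product of two Hilbert–Schmidt operators. -/
def IsTC {H : Type*} [NormedAddCommGroup H] [InnerProductSpace ℂ H]
    (T : H →L[ℂ] H) : Prop :=
  ∃ A B : H →L[ℂ] H, IsHS A ∧ IsHS B ∧ T = A * B

/-- The operator `d = i(p₊ - p₋)` associated to the orthogonal projection `P = p₊`
(so `p₋ = 1 - P`). -/
def dOp {H : Type*} [NormedAddCommGroup H] [InnerProductSpace ℂ H]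
    (P : H →L[ℂ] H) : H →L[ℂ] H :=
  Complex.I • (P - (1 - P))

section HilbertSchmidt

variable {𝕜 E F : Type*} [RCLike 𝕜] [NormedAddCommGroup E] [InnerProductSpace 𝕜 E]
  [NormedAddCommGroup F] [InnerProductSpace 𝕜 F] {ι κ : Type*}

theorem HilbertBasis.hasSum_norm_inner_sq (b : HilbertBasis ι 𝕜 E) (x : E) :
    HasSum (fun i => ‖(inner 𝕜 (b i) x : 𝕜)‖ ^ 2) (‖x‖ ^ 2) := by
  simpa [b.repr_apply_apply] using lp.hasSum_norm (p := 2) (by norm_num) (b.repr x)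

variable [CompleteSpace E] [CompleteSpace F]

theorem ContinuousLinearMap.norm_adjoint_apply_sq_le (b : HilbertBasis ι 𝕜 E) (X : E →L[𝕜] F)
    (hX : Summable fun i => ‖X (b i)‖ ^ 2) (y : F) :
    ‖adjoint X y‖ ^ 2 ≤ (∑' i, ‖X (b i)‖ ^ 2) * ‖y‖ ^ 2 := by
  have hparseval := b.hasSum_norm_inner_sq (adjoint X y)
  have hle : ∀ i, ‖(inner 𝕜 (b i) (adjoint X y) : 𝕜)‖ ^ 2 ≤ ‖X (b i)‖ ^ 2 * ‖y‖ ^ 2 := by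
    intro i
    rw [adjoint_inner_right, ← mul_pow]
    exact pow_le_pow_left₀ (norm_nonneg _) (norm_inner_le_norm _ _) 2
  rw [← hparseval.tsum_eq, ← tsum_mul_right]
  exact hparseval.summable.tsum_le_tsum hle (hX.mul_right _)

theorem ContinuousLinearMap.summable_norm_adjoint_apply_sq (b : HilbertBasis ι 𝕜 E)
    (c : HilbertBasis κ 𝕜 F) (X : E →L[𝕜] F) (hX : Summable fun i => ‖X (b i)‖ ^ 2) :
    Summable fun k => ‖adjoint X (c k)‖ ^ 2 := by
  have hrow : ∀ i, HasSum (fun k => ‖(inner 𝕜 (c k) (X (b i)) : 𝕜)‖ ^ 2) (‖X (b i)‖ ^ 2) :=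
    fun i => c.hasSum_norm_inner_sq _
  have hcol : ∀ k,
      HasSum (fun i => ‖(inner 𝕜 (c k) (X (b i)) : 𝕜)‖ ^ 2) (‖adjoint X (c k)‖ ^ 2) := by
    intro k
    refine (b.hasSum_norm_inner_sq (adjoint X (c k))).congr_fun fun i => ?_
    rw [adjoint_inner_right, norm_inner_symm]
  have hm : Summable fun p : ι × κ => ‖(inner 𝕜 (c p.2) (X (b p.1)) : 𝕜)‖ ^ 2 :=
    (summable_prod_of_nonneg fun _ => sq_nonneg _).mpr
      ⟨fun i => (hrow i).summable, hX.congr fun i => (hrow i).tsum_eq.symm⟩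
  exact ((summable_prod_of_nonneg fun _ => sq_nonneg _).mp hm.prod_symm).2.congr
    fun k => (hcol k).tsum_eq

theorem ContinuousLinearMap.summable_norm_apply_sq_of_hilbertBasis (b : HilbertBasis ι 𝕜 E)
    (c : HilbertBasis κ 𝕜 E) (X : E →L[𝕜] F) (hX : Summable fun i => ‖X (b i)‖ ^ 2) :
    Summable fun k => ‖X (c k)‖ ^ 2 := by
  obtain ⟨w, d, -⟩ := exists_hilbertBasis 𝕜 F
  simpa only [adjoint_adjoint] using
    summable_norm_adjoint_apply_sq d c _ (summable_norm_adjoint_apply_sq b d X hX)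

theorem ContinuousLinearMap.tsum_norm_adjoint_comp_apply_sq_le (b : HilbertBasis ι 𝕜 E)
    (X Y : E →L[𝕜] F) (hX : Summable fun i => ‖X (b i)‖ ^ 2)
    (hY : Summable fun i => ‖Y (b i)‖ ^ 2) :
    ∑' i, ‖(adjoint X ∘L Y) (b i)‖ ^ 2 ≤ (∑' i, ‖X (b i)‖ ^ 2) * ∑' i, ‖Y (b i)‖ ^ 2 := by
  rw [← tsum_mul_left]
  exact Summable.tsum_le_tsum (fun i => norm_adjoint_apply_sq_le b X hX (Y (b i)))
    ((hY.mul_left _).of_nonneg_of_le (fun _ => sq_nonneg _)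
      fun i => norm_adjoint_apply_sq_le b X hX (Y (b i)))
    (hY.mul_left _)

end HilbertSchmidt

section Compression

variable {𝕜 E : Type*} [RCLike 𝕜] [NormedAddCommGroup E] [InnerProductSpace 𝕜 E]
  [CompleteSpace E] {P : E →L[𝕜] E}

theorem IsSelfAdjoint.re_inner_conj_adjoint_mul_self_apply (hP : IsSelfAdjoint P)
    (T : E →L[𝕜] E) (x : E) :
    RCLike.re (inner 𝕜 x ((P * (adjoint T * T) * P) x)) = ‖T (P x)‖ ^ 2 := by
  rw [← mul_apply_eq_comp T P, apply_norm_sq_eq_inner_adjoint_right, ← star_eq_adjoint (T * P),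
    star_mul, hP.star_eq, star_eq_adjoint]
  simp only [mul_assoc, mul_apply_eq_comp, coe_comp, Function.comp_apply]

theorem IsSelfAdjoint.tsum_norm_conj_adjoint_mul_self_apply_sq_le (hP : IsSelfAdjoint P)
    {ι : Type*} (b : HilbertBasis ι 𝕜 E) (T Q : E →L[𝕜] E)
    (hTP : Summable fun i => ‖T (P (b i))‖ ^ 2) (hTQ : Summable fun i => ‖T (Q (b i))‖ ^ 2) :
    ∑' i, ‖(P * (adjoint T * T) * Q) (b i)‖ ^ 2 ≤
      (∑' i, ‖T (P (b i))‖ ^ 2) * ∑' i, ‖T (Q (b i))‖ ^ 2 := by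
  have hadj : adjoint (T * P) * (T * Q) = P * (adjoint T * T) * Q := by
    rw [← star_eq_adjoint, star_mul, hP.star_eq, star_eq_adjoint, mul_assoc, mul_assoc,
      mul_assoc]
  rw [← hadj]
  exact tsum_norm_adjoint_comp_apply_sq_le b (T * P) (T * Q) hTP hTQ

end Compression

section TraceClass

variable {H : Type*} [NormedAddCommGroup H] [InnerProductSpace ℂ H] {ι : Type*} {T : H →L[ℂ] H}

theorem IsHS.smul (hT : IsHS T) (c : ℂ) : IsHS (c • T) := by
  obtain ⟨ι₀, b₀, h₀⟩ := hT
  refine ⟨ι₀, b₀, (h₀.mul_left (‖c‖ ^ 2)).congr fun i => ?_⟩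
  rw [smul_apply, norm_smul, mul_pow]

theorem IsTC.smul (hT : IsTC T) (c : ℂ) : IsTC (c • T) := by
  obtain ⟨A, B, hA, hB, rfl⟩ := hT
  exact ⟨c • A, B, hA.smul c, hB, smul_mul_assoc c A B⟩

variable [CompleteSpace H]

theorem IsHS.summable_norm_apply_sq (hT : IsHS T) (b : HilbertBasis ι ℂ H) :
    Summable fun i => ‖T (b i)‖ ^ 2 := by
  obtain ⟨ι₀, b₀, h₀⟩ := hT
  exact summable_norm_apply_sq_of_hilbertBasis b₀ b T h₀

/-- `IsHS` quantifies over bases indexed in `Type`; `hA` only serves to supply such a basis. -/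
theorem IsHS.of_summable_norm_apply_sq {A : H →L[ℂ] H} (hA : IsHS A) (b : HilbertBasis ι ℂ H)
    (hT : Summable fun i => ‖T (b i)‖ ^ 2) : IsHS T := by
  obtain ⟨ι₀, b₀, -⟩ := hA
  exact ⟨ι₀, b₀, summable_norm_apply_sq_of_hilbertBasis b b₀ T hT⟩

theorem IsHS.adjoint (hT : IsHS T) : IsHS (adjoint T) := by
  obtain ⟨ι₀, b₀, h₀⟩ := hT
  exact ⟨ι₀, b₀, summable_norm_adjoint_apply_sq b₀ b₀ T h₀⟩

theorem IsTC.summable_norm_inner_apply (hT : IsTC T) (b : HilbertBasis ι ℂ H) :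
    Summable fun i => ‖(inner ℂ (b i) (T (b i)) : ℂ)‖ := by
  obtain ⟨A, B, hA, hB, rfl⟩ := hT
  have hAB : Summable fun i => (‖adjoint A (b i)‖ ^ 2 + ‖B (b i)‖ ^ 2) / 2 :=
    ((hA.adjoint.summable_norm_apply_sq b).add (hB.summable_norm_apply_sq b)).div_const 2
  refine hAB.of_nonneg_of_le (fun i => norm_nonneg _) fun i => ?_
  rw [mul_apply_eq_comp, ← adjoint_inner_left]
  nlinarith [norm_inner_le_norm (𝕜 := ℂ) (adjoint A (b i)) (B (b i)),
    sq_nonneg (‖adjoint A (b i)‖ - ‖B (b i)‖)]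

theorem IsTC.summable_re_inner_apply (hT : IsTC T) (b : HilbertBasis ι ℂ H) :
    Summable fun i => (inner ℂ (b i) (T (b i)) : ℂ).re :=
  (hT.summable_norm_inner_apply b).of_norm_bounded fun _ => Complex.abs_re_le_norm _

theorem ContinuousLinearMap.IsPositive.exists_eq_adjoint_mul_self {σ : H →L[ℂ] H}
    (hσ : σ.IsPositive) : ∃ T : H →L[ℂ] H, σ = adjoint T * T := by
  simpa only [star_eq_adjoint] using
    CStarAlgebra.nonneg_iff_eq_star_mul_self.mp ((nonneg_iff_isPositive σ).mpr hσ)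

theorem IsSelfAdjoint.summable_norm_apply_sq_of_isTC {P : H →L[ℂ] H} (hP : IsSelfAdjoint P)
    (b : HilbertBasis ι ℂ H) (h : IsTC (P * (adjoint T * T) * P)) :
    Summable fun i => ‖T (P (b i))‖ ^ 2 :=
  (h.summable_re_inner_apply b).congr fun i => hP.re_inner_conj_adjoint_mul_self_apply T (b i)

end TraceClass

theorem two_mul_sqrt_le_add_of_le_mul {a b s : ℝ} (ha : 0 ≤ a) (hb : 0 ≤ b) (hs : s ≤ a * b) :
    2 * √s ≤ a + b := by
  rcases le_or_gt s 0 with hs0 | hs0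
  · rw [Real.sqrt_eq_zero'.mpr hs0]
    linarith
  · nlinarith [Real.sq_sqrt hs0.le, Real.sqrt_nonneg s, sq_nonneg (a - b)]

theorem stmt12_general {H : Type*} [NormedAddCommGroup H] [InnerProductSpace ℂ H] [CompleteSpace H]
    (P : H →L[ℂ] H) (hP : IsSelfAdjoint P)
    {ι : Type*} (b : HilbertBasis ι ℂ H)
    (hb : ∀ i, P (b i) = b i ∨ P (b i) = 0)
    (ρ : H →L[ℂ] H)
    (hρ3 : IsTC (P * ρ * P)) (hρ4 : IsTC ((1 - P) * ρ * (1 - P)))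
    (hpos : (Complex.I • ρ).IsPositive) :
    IsTC ρ ∧
    (Summable fun i => (inner ℂ (b i) ((Complex.I • ρ) (b i)) : ℂ).re) ∧
    (∑' i, (inner ℂ (b i) ((Complex.I • ρ) (b i)) : ℂ).re) ≤
      (∑' i, (inner ℂ (b i) ((P * (Complex.I • ρ) * P) (b i)) : ℂ).re) +
        (∑' i, (inner ℂ (b i) (((1 - P) * (Complex.I • ρ) * (1 - P)) (b i)) : ℂ).re) +
        2 * Real.sqrt (∑' i, ‖(P * ρ * (1 - P)) (b i)‖ ^ 2) ∧
    (∑' i, (inner ℂ (b i) ((P * (Complex.I • ρ) * P) (b i)) : ℂ).re) +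
        (∑' i, (inner ℂ (b i) (((1 - P) * (Complex.I • ρ) * (1 - P)) (b i)) : ℂ).re) +
        2 * Real.sqrt (∑' i, ‖(P * ρ * (1 - P)) (b i)‖ ^ 2) ≤
      (1 + Real.sqrt 2) * ∑' i, (inner ℂ (b i) ((Complex.I • ρ) (b i)) : ℂ).re := by
  obtain ⟨T, hT⟩ := hpos.exists_eq_adjoint_mul_self
  have hQ : IsSelfAdjoint (1 - P) := (IsSelfAdjoint.one _).sub hP
  have hρ : ρ = (-Complex.I) • (adjoint T * T) := by
    rw [← hT, smul_smul]; simp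
  have hconj {R : H →L[ℂ] H} (h : IsTC (R * ρ * R)) : IsTC (R * (adjoint T * T) * R) := by
    simpa [hρ, smul_smul] using h.smul Complex.I
  have hsumP := hP.summable_norm_apply_sq_of_isTC b (hconj hρ3)
  have hsumQ := hQ.summable_norm_apply_sq_of_isTC b (hconj hρ4)
  have hdiag (i : ι) : (inner ℂ (b i) ((Complex.I • ρ) (b i))).re = ‖T (b i)‖ ^ 2 := by
    rw [hT]; exact (apply_norm_sq_eq_inner_adjoint_right T (b i)).symm
  have htrace : HasSum (fun i => ‖T (b i)‖ ^ 2)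
      ((∑' i, ‖T (P (b i))‖ ^ 2) + ∑' i, ‖T ((1 - P) (b i))‖ ^ 2) :=
    (hsumP.hasSum.add hsumQ.hasSum).congr_fun fun i => by rcases hb i with h | h <;> simp [h]
  have hTC : IsTC ρ := by
    obtain ⟨A, -, hA, -⟩ := hρ3
    have hHS : IsHS T := hA.of_summable_norm_apply_sq b htrace.summable
    exact ⟨_, T, hHS.adjoint.smul _, hHS, by rw [hρ, smul_mul_assoc]⟩
  have hoff : ∑' i, ‖(P * ρ * (1 - P)) (b i)‖ ^ 2 ≤
      (∑' i, ‖T (P (b i))‖ ^ 2) * ∑' i, ‖T ((1 - P) (b i))‖ ^ 2 := by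
    simpa [hρ, norm_smul] using
      hP.tsum_norm_conj_adjoint_mul_self_apply_sq_le b T (1 - P) hsumP hsumQ
  have hA : 0 ≤ ∑' i, ‖T (P (b i))‖ ^ 2 := tsum_nonneg fun _ => sq_nonneg _
  have hB : 0 ≤ ∑' i, ‖T ((1 - P) (b i))‖ ^ 2 := tsum_nonneg fun _ => sq_nonneg _
  have hamgm := two_mul_sqrt_le_add_of_le_mul hA hB hoff
  refine ⟨hTC, htrace.summable.congr fun i => (hdiag i).symm, ?_, ?_⟩ <;>
    rw [tsum_congr hdiag, htrace.tsum_eq, hT] <;>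
    simp only [← RCLike.re_to_complex, hP.re_inner_conj_adjoint_mul_self_apply,
      hQ.re_inner_conj_adjoint_mul_self_apply]
  · linarith [Real.sqrt_nonneg (∑' i, ‖(P * ρ * (1 - P)) (b i)‖ ^ 2)]
  · nlinarith [Real.one_lt_sqrt_two]

/-- If `ρ ∈ (u_res)_*` and `iρ ≥ 0`, then `ρ` is trace class and
`‖ρ‖₁ ≤ ‖ρ‖_{(u_res)_*} ≤ (1+√2)‖ρ‖₁`, where
`‖ρ‖_{(u_res)_*} = ‖p₊ρp₊‖₁ + ‖p₋ρp₋‖₁ + 2‖p₊ρp₋‖₂` (trace norms of the positive operators are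
expressed as traces along an adapted Hilbert basis). -/
theorem stmt12 {H : Type*} [NormedAddCommGroup H] [InnerProductSpace ℂ H] [CompleteSpace H]
    (P : H →L[ℂ] H) (hP : IsSelfAdjoint P) (hP2 : P * P = P)
    {ι : Type*} (b : HilbertBasis ι ℂ H)
    (hb : ∀ i, P (b i) = b i ∨ P (b i) = 0)
    (ρ : H →L[ℂ] H)
    (hρ1 : star ρ = -ρ) (hρ2 : IsHS (dOp P * ρ - ρ * dOp P))
    (hρ3 : IsTC (P * ρ * P)) (hρ4 : IsTC ((1 - P) * ρ * (1 - P)))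
    (hpos : (Complex.I • ρ).IsPositive) :
    IsTC ρ ∧
    (Summable fun i => (inner ℂ (b i) ((Complex.I • ρ) (b i)) : ℂ).re) ∧
    (∑' i, (inner ℂ (b i) ((Complex.I • ρ) (b i)) : ℂ).re) ≤
      (∑' i, (inner ℂ (b i) ((P * (Complex.I • ρ) * P) (b i)) : ℂ).re) +
        (∑' i, (inner ℂ (b i) (((1 - P) * (Complex.I • ρ) * (1 - P)) (b i)) : ℂ).re) +
        2 * Real.sqrt (∑' i, ‖(P * ρ * (1 - P)) (b i)‖ ^ 2) ∧
    (∑' i, (inner ℂ (b i) ((P * (Complex.I • ρ) * P) (b i)) : ℂ).re) +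
        (∑' i, (inner ℂ (b i) (((1 - P) * (Complex.I • ρ) * (1 - P)) (b i)) : ℂ).re) +
        2 * Real.sqrt (∑' i, ‖(P * ρ * (1 - P)) (b i)‖ ^ 2) ≤
      (1 + Real.sqrt 2) * ∑' i, (inner ℂ (b i) ((Complex.I • ρ) (b i)) : ℂ).re :=
  stmt12_general P hP b hb ρ hρ3 hρ4 hpos
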